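/- Every Banach space X has the K_u2-approximation property: for every Banach space Y, every unconditionally 2-compact operator T ∈ K_u2(Y,X) is the limit in the norm ‖·‖_{K_u2} of a sequence of bounded finite-rank operators Y → X. -/

import Mathlib

noncomputable section

open Filter Topology Metric
open scoped ENNReal NNReal

/-- Membership in the coefficient ball used to form `p`-convex hulls: the closed unit ball
of `c₀` when `p = 1`, and the closed unit ball of `ℓ^{p'}` (with `p' = p/(p-1)` the conjugate
exponent of `p`) when `p ≠ 1`. -/
def InCoeffBall (𝕜 : Type) [RCLike 𝕜] (p : ℝ) (lam : ℕ → 𝕜) : Prop :=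
  if p = 1 then Filter.Tendsto (fun k => ‖lam k‖) Filter.atTop (nhds 0) ∧ ∀ k, ‖lam k‖ ≤ 1
  else Summable (fun k => ‖lam k‖ ^ (p / (p - 1))) ∧ (∑' k, ‖lam k‖ ^ (p / (p - 1))) ≤ 1

/-- The `p`-convex hull `p`-co{x_k} of a sequence `x : ℕ → X`. -/
def pConvHull (𝕜 : Type) [RCLike 𝕜] {X : Type} [NormedAddCommGroup X] [NormedSpace 𝕜 X]
    (p : ℝ) (x : ℕ → X) : Set X :=
  {y | ∃ lam : ℕ → 𝕜, InCoeffBall 𝕜 p lam ∧ HasSum (fun k => lam k • x k) y}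

/-- A sequence is weakly `p`-summable if `∑ₖ ‖x*(x_k)‖^p < ∞` for every functional `x*`. -/
def WeaklyPSummable (𝕜 : Type) [RCLike 𝕜] {X : Type} [NormedAddCommGroup X] [NormedSpace 𝕜 X]
    (p : ℝ) (x : ℕ → X) : Prop :=
  ∀ f : StrongDual 𝕜 X, Summable fun k => ‖f (x k)‖ ^ p

/-- The weak `p`-summability norm `‖(x_k)‖_{p,w}`. -/
def weakPNorm (𝕜 : Type) [RCLike 𝕜] {X : Type} [NormedAddCommGroup X] [NormedSpace 𝕜 X]
    (p : ℝ) (x : ℕ → X) : ℝ :=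
  ⨆ f : {f : StrongDual 𝕜 X // ‖f‖ ≤ 1}, (∑' k, ‖f.1 (x k)‖ ^ p) ^ (1 / p)

/-- A sequence is unconditionally `p`-summable if it is weakly `p`-summable and the weak
`p`-norms of its tails tend to `0`. -/
def UncondPSummable (𝕜 : Type) [RCLike 𝕜] {X : Type} [NormedAddCommGroup X] [NormedSpace 𝕜 X]
    (p : ℝ) (x : ℕ → X) : Prop :=
  WeaklyPSummable 𝕜 p x ∧
    Filter.Tendsto (fun n => weakPNorm 𝕜 p fun k => x (n + k)) Filter.atTop (nhds 0)

/-- A sequence is strongly `p`-summable if `∑ₖ ‖x_k‖^p < ∞`. -/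
def StronglyPSummable {X : Type} [NormedAddCommGroup X] (p : ℝ) (x : ℕ → X) : Prop :=
  Summable fun k => ‖x k‖ ^ p

/-- The strong `p`-summability norm `‖(x_k)‖_p`. -/
def strongPNorm {X : Type} [NormedAddCommGroup X] (p : ℝ) (x : ℕ → X) : ℝ :=
  (∑' k, ‖x k‖ ^ p) ^ (1 / p)

/-- A bounded finite-rank operator. -/
def IsFiniteRankOp (𝕜 : Type) [RCLike 𝕜] {Y X : Type} [NormedAddCommGroup Y] [NormedSpace 𝕜 Y]
    [NormedAddCommGroup X] [NormedSpace 𝕜 X] (T : Y →L[𝕜] X) : Prop :=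
  FiniteDimensional 𝕜 ↥(LinearMap.range (T : Y →ₗ[𝕜] X))

/-- `T` is unconditionally `p`-compact: `T(B_Y) ⊆ p`-co{x_k} for some unconditionally
`p`-summable sequence `(x_k)`. -/
def IsKupOp (𝕜 : Type) [RCLike 𝕜] {Y X : Type} [NormedAddCommGroup Y] [NormedSpace 𝕜 Y]
    [NormedAddCommGroup X] [NormedSpace 𝕜 X] (p : ℝ) (T : Y →L[𝕜] X) : Prop :=
  ∃ x : ℕ → X, UncondPSummable 𝕜 p x ∧ ⇑T '' Metric.closedBall 0 1 ⊆ pConvHull 𝕜 p x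

/-- The `K_up` ideal norm `‖T‖_{K_up}`. -/
def kupNorm (𝕜 : Type) [RCLike 𝕜] {Y X : Type} [NormedAddCommGroup Y] [NormedSpace 𝕜 Y]
    [NormedAddCommGroup X] [NormedSpace 𝕜 X] (p : ℝ) (T : Y →L[𝕜] X) : ℝ :=
  sInf {c : ℝ | ∃ x : ℕ → X, UncondPSummable 𝕜 p x ∧
    ⇑T '' Metric.closedBall 0 1 ⊆ pConvHull 𝕜 p x ∧ c = weakPNorm 𝕜 p x}

/-- `T` is Sinha–Karn `p`-compact: `T(B_Y) ⊆ p`-co{x_k} for some strongly `p`-summable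
sequence `(x_k)`. -/
def IsSKpOp (𝕜 : Type) [RCLike 𝕜] {Y X : Type} [NormedAddCommGroup Y] [NormedSpace 𝕜 Y]
    [NormedAddCommGroup X] [NormedSpace 𝕜 X] (p : ℝ) (T : Y →L[𝕜] X) : Prop :=
  ∃ x : ℕ → X, StronglyPSummable p x ∧ ⇑T '' Metric.closedBall 0 1 ⊆ pConvHull 𝕜 p x

/-- The `SK_p` ideal norm `‖T‖_{SK_p}`. -/
def skpNorm (𝕜 : Type) [RCLike 𝕜] {Y X : Type} [NormedAddCommGroup Y] [NormedSpace 𝕜 Y]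
    [NormedAddCommGroup X] [NormedSpace 𝕜 X] (p : ℝ) (T : Y →L[𝕜] X) : ℝ :=
  sInf {c : ℝ | ∃ x : ℕ → X, StronglyPSummable p x ∧
    ⇑T '' Metric.closedBall 0 1 ⊆ pConvHull 𝕜 p x ∧ c = strongPNorm p x}

/-- `T` is weakly `1`-compact: `T(B_Y) ⊆ 1`-co{x_k} for some weakly `1`-summable `(x_k)`. -/
def IsW1Op (𝕜 : Type) [RCLike 𝕜] {Y X : Type} [NormedAddCommGroup Y] [NormedSpace 𝕜 Y]
    [NormedAddCommGroup X] [NormedSpace 𝕜 X] (T : Y →L[𝕜] X) : Prop :=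
  ∃ x : ℕ → X, WeaklyPSummable 𝕜 1 x ∧ ⇑T '' Metric.closedBall 0 1 ⊆ pConvHull 𝕜 1 x

/-- The `W₁` ideal norm `‖T‖_{W₁}`. -/
def w1Norm (𝕜 : Type) [RCLike 𝕜] {Y X : Type} [NormedAddCommGroup Y] [NormedSpace 𝕜 Y]
    [NormedAddCommGroup X] [NormedSpace 𝕜 X] (T : Y →L[𝕜] X) : ℝ :=
  sInf {c : ℝ | ∃ x : ℕ → X, WeaklyPSummable 𝕜 1 x ∧
    ⇑T '' Metric.closedBall 0 1 ⊆ pConvHull 𝕜 1 x ∧ c = weakPNorm 𝕜 1 x}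

/-- `T` is approximable: an operator-norm limit of bounded finite-rank operators. -/
def IsApproximable (𝕜 : Type) [RCLike 𝕜] {Y X : Type} [NormedAddCommGroup Y] [NormedSpace 𝕜 Y]
    [NormedAddCommGroup X] [NormedSpace 𝕜 X] (T : Y →L[𝕜] X) : Prop :=
  ∃ F : ℕ → Y →L[𝕜] X, (∀ n, IsFiniteRankOp 𝕜 (F n)) ∧
    Filter.Tendsto (fun n => ‖T - F n‖) Filter.atTop (nhds 0)

/-- The (classical, Grothendieck) approximation property. -/
def HasAP (𝕜 : Type) [RCLike 𝕜] (X : Type) [NormedAddCommGroup X] [NormedSpace 𝕜 X] : Prop :=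
  ∀ ε : ℝ, 0 < ε → ∀ K : Set X, IsCompact K →
    ∃ U : X →L[𝕜] X, IsFiniteRankOp 𝕜 U ∧ ∀ x ∈ K, ‖U x - x‖ < ε

/-- The `K_up`-approximation property: every unconditionally `p`-compact operator into `X`
is a `‖·‖_{K_up}`-limit of bounded finite-rank operators. -/
def HasKupAP (𝕜 : Type) [RCLike 𝕜] (p : ℝ) (X : Type) [NormedAddCommGroup X]
    [NormedSpace 𝕜 X] : Prop :=
  ∀ (Y : Type) [NormedAddCommGroup Y] [NormedSpace 𝕜 Y] [CompleteSpace Y],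
    ∀ T : Y →L[𝕜] X, IsKupOp 𝕜 p T →
      ∃ F : ℕ → Y →L[𝕜] X, (∀ n, IsFiniteRankOp 𝕜 (F n)) ∧ (∀ n, IsKupOp 𝕜 p (T - F n)) ∧
        Filter.Tendsto (fun n => kupNorm 𝕜 p (T - F n)) Filter.atTop (nhds 0)

/-- The uniform `K_up`-approximation property: every unconditionally `p`-compact operator
into `X` is an operator-norm limit of bounded finite-rank operators. -/
def HasUniformKupAP (𝕜 : Type) [RCLike 𝕜] (p : ℝ) (X : Type) [NormedAddCommGroup X]
    [NormedSpace 𝕜 X] : Prop :=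
  ∀ (Y : Type) [NormedAddCommGroup Y] [NormedSpace 𝕜 Y] [CompleteSpace Y],
    ∀ T : Y →L[𝕜] X, IsKupOp 𝕜 p T → IsApproximable 𝕜 T

/-- The `SK_p`-approximation property. -/
def HasSKpAP (𝕜 : Type) [RCLike 𝕜] (p : ℝ) (X : Type) [NormedAddCommGroup X]
    [NormedSpace 𝕜 X] : Prop :=
  ∀ (Y : Type) [NormedAddCommGroup Y] [NormedSpace 𝕜 Y] [CompleteSpace Y],
    ∀ T : Y →L[𝕜] X, IsSKpOp 𝕜 p T →
      ∃ F : ℕ → Y →L[𝕜] X, (∀ n, IsFiniteRankOp 𝕜 (F n)) ∧ (∀ n, IsSKpOp 𝕜 p (T - F n)) ∧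
        Filter.Tendsto (fun n => skpNorm 𝕜 p (T - F n)) Filter.atTop (nhds 0)

/-- The `W₁`-approximation property. -/
def HasW1AP (𝕜 : Type) [RCLike 𝕜] (X : Type) [NormedAddCommGroup X] [NormedSpace 𝕜 X] : Prop :=
  ∀ (Y : Type) [NormedAddCommGroup Y] [NormedSpace 𝕜 Y] [CompleteSpace Y],
    ∀ T : Y →L[𝕜] X, IsW1Op 𝕜 T →
      ∃ F : ℕ → Y →L[𝕜] X, (∀ n, IsFiniteRankOp 𝕜 (F n)) ∧ (∀ n, IsW1Op 𝕜 (T - F n)) ∧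
        Filter.Tendsto (fun n => w1Norm 𝕜 (T - F n)) Filter.atTop (nhds 0)

/-- Cotype 2. -/
def HasCotype2 (X : Type) [NormedAddCommGroup X] : Prop :=
  ∃ C : ℝ, 0 < C ∧ ∀ (n : ℕ) (z : Fin n → X),
    (∑ i, ‖z i‖ ^ 2) ^ ((1 : ℝ) / 2) ≤
      C * ((∑ ε : Fin n → Bool, ‖∑ i, (if ε i then z i else -z i)‖ ^ 2) / 2 ^ n) ^ ((1 : ℝ) / 2)

/-- A normed space is reflexive if the canonical embedding into the bidual is surjective. -/
def ReflexiveSpace (𝕜 : Type) [RCLike 𝕜] (X : Type) [NormedAddCommGroup X]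
    [NormedSpace 𝕜 X] : Prop :=
  Function.Surjective ⇑(NormedSpace.inclusionInDoubleDual 𝕜 X)

/-- `T` factors compactly through a closed subspace of `E`: `T = B ∘ A` with `M ⊆ E` a closed
subspace and `A`, `B` compact operators. -/
def FactorsCompactlyThrough (𝕜 : Type) [RCLike 𝕜] (E : Type) [NormedAddCommGroup E]
    [NormedSpace 𝕜 E] {X Y : Type} [NormedAddCommGroup X] [NormedSpace 𝕜 X]
    [NormedAddCommGroup Y] [NormedSpace 𝕜 Y] (T : X →L[𝕜] Y) : Prop :=
  ∃ M : Submodule 𝕜 E, IsClosed (M : Set E) ∧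
    ∃ (A : X →L[𝕜] ↥M) (B : ↥M →L[𝕜] Y),
      IsCompactOperator ⇑A ∧ IsCompactOperator ⇑B ∧ B.comp A = T

/-- The set of numbers `‖A‖ * ‖B‖` over all compact factorizations `T = B ∘ A` of `T` through
a closed subspace of `E`. -/
def factorNorms (𝕜 : Type) [RCLike 𝕜] (E : Type) [NormedAddCommGroup E]
    [NormedSpace 𝕜 E] {X Y : Type} [NormedAddCommGroup X] [NormedSpace 𝕜 X]
    [NormedAddCommGroup Y] [NormedSpace 𝕜 Y] (T : X →L[𝕜] Y) : Set ℝ :=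
  {c : ℝ | ∃ M : Submodule 𝕜 E, IsClosed (M : Set E) ∧
    ∃ (A : X →L[𝕜] ↥M) (B : ↥M →L[𝕜] Y),
      IsCompactOperator ⇑A ∧ IsCompactOperator ⇑B ∧ B.comp A = T ∧ c = ‖A‖ * ‖B‖}


/-! Weak 2-summability of `(x_k)` makes `μ ↦ ∑ μ_k x_k` a bounded operator `Φ : ℓ² → X`
(Banach–Steinhaus), and `2-co{x_k} = Φ(B_{ℓ²})`. So `T(B_Y) ⊆ Φ(B_{ℓ²})`, and choosing minimal-norm
preimages lifts `T = Φ ∘ S` with `‖S‖ ≤ 1`. The finite-rank operators `F_n y = ∑_{k<n} (S y)_k x_k`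
then satisfy `(T - F_n)(B_Y) ⊆ 2-co{x_{n+k}}`, whence `‖T - F_n‖_{K_u2} ≤ ‖(x_{n+k})_k‖_{2,w} → 0`. -/

open scoped lp

namespace lp

variable {ι : Type*} {G : ι → Type*} [∀ i, NormedAddCommGroup (G i)]

theorem summable_norm_sq (f : lp G 2) : Summable fun i => ‖f i‖ ^ 2 := by
  simpa using (lp.memℓp f).summable (by norm_num)

theorem norm_sq_eq_tsum (f : lp G 2) : ‖f‖ ^ 2 = ∑' i, ‖f i‖ ^ 2 := by
  simpa using lp.norm_rpow_eq_tsum (p := 2) (by norm_num) f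

theorem sqrt_sum_norm_sq_le (f : lp G 2) (s : Finset ι) : √(∑ i ∈ s, ‖f i‖ ^ 2) ≤ ‖f‖ :=
  Real.sqrt_le_left (norm_nonneg f) |>.mpr <|
    (norm_sq_eq_tsum f).symm ▸ (summable_norm_sq f).sum_le_tsum s fun i _ => by positivity

end lp

variable {𝕜 : Type} [RCLike 𝕜] {X : Type} [NormedAddCommGroup X] [NormedSpace 𝕜 X]

theorem inCoeffBall_two_iff {lam : ℕ → 𝕜} :
    InCoeffBall 𝕜 2 lam ↔ ∃ μ : ℓ²(ℕ, 𝕜), ‖μ‖ ≤ 1 ∧ ⇑μ = lam := by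
  rw [InCoeffBall, if_neg (by norm_num), show (2 : ℝ) / (2 - 1) = 2 by norm_num]
  simp only [Real.rpow_two]
  constructor
  · rintro ⟨hsum, hle⟩
    refine ⟨⟨lam, memℓp_gen (by simpa using hsum)⟩, ?_, rfl⟩
    rw [← pow_le_one_iff_of_nonneg (norm_nonneg _) two_ne_zero, lp.norm_sq_eq_tsum]
    exact hle
  · rintro ⟨μ, hμ, rfl⟩
    exact ⟨lp.summable_norm_sq μ, lp.norm_sq_eq_tsum μ ▸ pow_le_one₀ (norm_nonneg _) hμ⟩

theorem InCoeffBall.comp_injective {p : ℝ} {lam : ℕ → 𝕜} (h : InCoeffBall 𝕜 p lam)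
    {e : ℕ → ℕ} (he : e.Injective) : InCoeffBall 𝕜 p (lam ∘ e) := by
  unfold InCoeffBall at h ⊢
  split_ifs at h ⊢ with hp
  · have he' : Tendsto e atTop atTop := by
      simpa only [Nat.cofinite_eq_atTop] using he.tendsto_cofinite
    exact ⟨h.1.comp he', fun k => h.2 (e k)⟩
  · exact ⟨h.1.comp_injective he,
      (tsum_comp_le_tsum_of_inj h.1 (fun _ => by positivity) he).trans h.2⟩

theorem weakPNorm_nonneg (p : ℝ) (x : ℕ → X) : 0 ≤ weakPNorm 𝕜 p x :=
  Real.iSup_nonneg fun _ => by positivity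

theorem UncondPSummable.nat_add {p : ℝ} {x : ℕ → X} (hx : UncondPSummable 𝕜 p x) (n : ℕ) :
    UncondPSummable 𝕜 p fun k => x (n + k) := by
  refine ⟨fun f => ?_, ?_⟩
  · simpa only [add_comm n] using (summable_nat_add_iff n).mpr (hx.1 f)
  · simpa only [Function.comp_def, add_assoc, add_left_comm] using
      hx.2.comp (tendsto_add_atTop_nat n)

theorem kupNorm_nonneg {Y : Type} [NormedAddCommGroup Y] [NormedSpace 𝕜 Y] (p : ℝ)
    (T : Y →L[𝕜] X) : 0 ≤ kupNorm 𝕜 p T :=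
  Real.sInf_nonneg <| by rintro _ ⟨x, -, -, rfl⟩; exact weakPNorm_nonneg p x

theorem kupNorm_le_weakPNorm {Y : Type} [NormedAddCommGroup Y] [NormedSpace 𝕜 Y] {p : ℝ}
    {T : Y →L[𝕜] X} {x : ℕ → X} (hx : UncondPSummable 𝕜 p x)
    (hT : ⇑T '' closedBall 0 1 ⊆ pConvHull 𝕜 p x) : kupNorm 𝕜 p T ≤ weakPNorm 𝕜 p x :=
  csInf_le ⟨0, by rintro _ ⟨x, -, -, rfl⟩; exact weakPNorm_nonneg p x⟩ ⟨x, hx, hT, rfl⟩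

theorem IsFiniteRankOp.comp {Y Z : Type} [NormedAddCommGroup Y] [NormedSpace 𝕜 Y]
    [NormedAddCommGroup Z] [NormedSpace 𝕜 Z] {A : Y →L[𝕜] X} (hA : IsFiniteRankOp 𝕜 A)
    (S : Z →L[𝕜] Y) : IsFiniteRankOp 𝕜 (A.comp S) :=
  have : FiniteDimensional 𝕜 (LinearMap.range (A : Y →ₗ[𝕜] X)) := hA
  Submodule.finiteDimensional_of_le <|
    LinearMap.range_comp_le_range (S : Z →ₗ[𝕜] Y) (A : Y →ₗ[𝕜] X)

theorem norm_map_sum_smul_le {ι : Type*} (f : StrongDual 𝕜 X) (s : Finset ι) (c : ι → 𝕜)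
    (x : ι → X) :
    ‖f (∑ k ∈ s, c k • x k)‖ ≤ √(∑ k ∈ s, ‖c k‖ ^ 2) * √(∑ k ∈ s, ‖f (x k)‖ ^ 2) := by
  simp only [map_sum, map_smul, smul_eq_mul]
  calc ‖∑ k ∈ s, c k * f (x k)‖ ≤ ∑ k ∈ s, ‖c k‖ * ‖f (x k)‖ :=
        (norm_sum_le _ _).trans_eq (by simp only [norm_mul])
    _ ≤ _ := Real.sum_mul_le_sqrt_mul_sqrt _ _ _

theorem WeaklyPSummable.exists_norm_sum_smul_le_of_sum_le_one {x : ℕ → X}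
    (hx : WeaklyPSummable 𝕜 2 x) :
    ∃ C, ∀ (s : Finset ℕ) (c : ℕ → 𝕜), ∑ k ∈ s, ‖c k‖ ^ 2 ≤ 1 → ‖∑ k ∈ s, c k • x k‖ ≤ C := by
  let ι := {q : Finset ℕ × (ℕ → 𝕜) // ∑ k ∈ q.1, ‖q.2 k‖ ^ 2 ≤ 1}
  let g : ι → StrongDual 𝕜 (StrongDual 𝕜 X) := fun q =>
    NormedSpace.inclusionInDoubleDual 𝕜 X (∑ k ∈ q.1.1, q.1.2 k • x k)
  have hg : ∀ f, ∃ C, ∀ q, ‖g q f‖ ≤ C := fun f => by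
    refine ⟨√(∑' k, ‖f (x k)‖ ^ 2), fun ⟨⟨s, c⟩, hc⟩ => ?_⟩
    have hf : Summable fun k => ‖f (x k)‖ ^ 2 := by simpa using hx f
    calc ‖f (∑ k ∈ s, c k • x k)‖
        ≤ √(∑ k ∈ s, ‖c k‖ ^ 2) * √(∑ k ∈ s, ‖f (x k)‖ ^ 2) := norm_map_sum_smul_le f s c x
      _ ≤ 1 * √(∑' k, ‖f (x k)‖ ^ 2) := by
        gcongr
        · exact Real.sqrt_le_one.mpr hc
        · exact hf.sum_le_tsum s fun k _ => by positivity
      _ = √(∑' k, ‖f (x k)‖ ^ 2) := one_mul _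
  obtain ⟨C, hC⟩ := banach_steinhaus hg
  refine ⟨C, fun s c hc => ?_⟩
  rw [← (NormedSpace.inclusionInDoubleDualLi 𝕜).norm_map]
  exact hC ⟨(s, c), hc⟩

theorem WeaklyPSummable.exists_norm_sum_smul_le {x : ℕ → X} (hx : WeaklyPSummable 𝕜 2 x) :
    ∃ C, 0 ≤ C ∧ ∀ (s : Finset ℕ) (c : ℕ → 𝕜),
      ‖∑ k ∈ s, c k • x k‖ ≤ C * √(∑ k ∈ s, ‖c k‖ ^ 2) := by
  obtain ⟨C, hC⟩ := hx.exists_norm_sum_smul_le_of_sum_le_one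
  have hC₀ : 0 ≤ C := by simpa using hC ∅ 0
  refine ⟨C, hC₀, fun s c => ?_⟩
  have hr : √(∑ k ∈ s, ‖c k‖ ^ 2) ^ 2 = ∑ k ∈ s, ‖c k‖ ^ 2 := Real.sq_sqrt (by positivity)
  have hr₀ : 0 ≤ √(∑ k ∈ s, ‖c k‖ ^ 2) := Real.sqrt_nonneg _
  generalize √(∑ k ∈ s, ‖c k‖ ^ 2) = r at hr hr₀ ⊢
  rcases hr₀.eq_or_lt with hr₀ | hr₀
  · have hsum : ∑ k ∈ s, ‖c k‖ ^ 2 = 0 := by rw [← hr, ← hr₀, zero_pow two_ne_zero]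
    have hc : ∀ k ∈ s, c k = 0 := by
      simpa using (Finset.sum_eq_zero_iff_of_nonneg fun k _ => by positivity).mp hsum
    rw [Finset.sum_eq_zero fun k hk => by rw [hc k hk, zero_smul], ← hr₀]
    simp
  · have h := hC s (fun k => ((r⁻¹ : ℝ) : 𝕜) * c k) (by
      simp only [norm_mul, RCLike.norm_ofReal, abs_of_pos (inv_pos.mpr hr₀), mul_pow,
        ← Finset.mul_sum, ← hr, inv_pow]
      exact (inv_mul_cancel₀ (by positivity)).le)
    simp only [mul_smul, ← Finset.smul_sum, norm_smul, RCLike.norm_ofReal,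
      abs_of_pos (inv_pos.mpr hr₀)] at h
    rw [inv_mul_le_iff₀ hr₀] at h
    linarith

theorem summable_smul_of_norm_sum_le [CompleteSpace X] {x : ℕ → X} {C : ℝ} (hC₀ : 0 ≤ C)
    (hC : ∀ (s : Finset ℕ) (c : ℕ → 𝕜), ‖∑ k ∈ s, c k • x k‖ ≤ C * √(∑ k ∈ s, ‖c k‖ ^ 2))
    {c : ℕ → 𝕜} (hc : Summable fun k => ‖c k‖ ^ 2) : Summable fun k => c k • x k := by
  refine summable_iff_vanishing_norm.mpr fun ε hε => ?_
  obtain ⟨s, hs⟩ := summable_iff_vanishing_norm.mp hc ((ε / (C + 1)) ^ 2) (by positivity)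
  refine ⟨s, fun t ht => ?_⟩
  have hct : √(∑ k ∈ t, ‖c k‖ ^ 2) < ε / (C + 1) := by
    rw [Real.sqrt_lt' (by positivity)]
    simpa [Real.norm_of_nonneg (Finset.sum_nonneg fun k _ => sq_nonneg ‖c k‖)] using hs t ht
  calc ‖∑ k ∈ t, c k • x k‖ ≤ (C + 1) * √(∑ k ∈ t, ‖c k‖ ^ 2) :=
        (hC t c).trans (by gcongr; linarith)
    _ < (C + 1) * (ε / (C + 1)) := by gcongr
    _ = ε := by field_simp

theorem WeaklyPSummable.exists_hasSum_smul [CompleteSpace X] {x : ℕ → X}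
    (hx : WeaklyPSummable 𝕜 2 x) :
    ∃ Φ : ℓ²(ℕ, 𝕜) →L[𝕜] X, ∀ μ, HasSum (fun k => μ k • x k) (Φ μ) := by
  obtain ⟨C, hC₀, hC⟩ := hx.exists_norm_sum_smul_le
  have hsum (μ : ℓ²(ℕ, 𝕜)) : HasSum (fun k => μ k • x k) (∑' k, μ k • x k) :=
    (summable_smul_of_norm_sum_le hC₀ hC (lp.summable_norm_sq μ)).hasSum
  let Φ : ℓ²(ℕ, 𝕜) →ₗ[𝕜] X :=
    { toFun := fun μ => ∑' k, μ k • x k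
      map_add' := fun μ ν => by
        simpa only [lp.coeFn_add, Pi.add_apply, add_smul] using ((hsum μ).add (hsum ν)).tsum_eq
      map_smul' := fun a μ => by
        simpa only [lp.coeFn_smul, Pi.smul_apply, smul_eq_mul, mul_smul, RingHom.id_apply] using
          ((hsum μ).const_smul a).tsum_eq }
  refine ⟨Φ.mkContinuous C fun μ => ?_, hsum⟩
  refine le_of_tendsto' (hsum μ).norm fun s => (hC s μ).trans ?_
  gcongr
  exact lp.sqrt_sum_norm_sq_le μ s

theorem pConvHull_two_eq_image_closedBall {x : ℕ → X} {Φ : ℓ²(ℕ, 𝕜) →L[𝕜] X}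
    (hΦ : ∀ μ, HasSum (fun k => μ k • x k) (Φ μ)) :
    pConvHull 𝕜 2 x = Φ '' closedBall 0 1 := by
  ext y
  simp only [pConvHull, inCoeffBall_two_iff, Set.mem_ofPred_eq, Set.mem_image,
    mem_closedBall_zero_iff]
  constructor
  · rintro ⟨_, ⟨μ, hμ, rfl⟩, hy⟩
    exact ⟨μ, hμ, (hΦ μ).unique hy⟩
  · rintro ⟨μ, hμ, rfl⟩
    exact ⟨μ, ⟨μ, hμ, rfl⟩, hΦ μ⟩

section Lift

variable {Y H : Type*} [NormedAddCommGroup Y] [NormedSpace 𝕜 Y]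

theorem exists_apply_eq_norm_le_of_image_closedBall_subset [NormedAddCommGroup H]
    [NormedSpace 𝕜 H] {Φ : H →L[𝕜] X} {T : Y →L[𝕜] X}
    (hT : ⇑T '' closedBall 0 1 ⊆ ⇑Φ '' closedBall 0 1) (y : Y) :
    ∃ v, Φ v = T y ∧ ‖v‖ ≤ ‖y‖ := by
  rcases eq_or_ne y 0 with rfl | hy
  · exact ⟨0, by simp, by simp⟩
  have hy' : (‖y‖ : 𝕜) ≠ 0 := by simpa using hy
  obtain ⟨v, hv, hΦv⟩ := hT ⟨(‖y‖ : 𝕜)⁻¹ • y, by simp [norm_smul, hy], rfl⟩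
  refine ⟨(‖y‖ : 𝕜) • v, ?_, ?_⟩
  · rw [map_smul, hΦv, map_smul, smul_inv_smul₀ hy']
  · rw [norm_smul, RCLike.norm_ofReal, abs_norm]
    exact mul_le_of_le_one_right (norm_nonneg y) (mem_closedBall_zero_iff.mp hv)

theorem ContinuousLinearMap.exists_comp_eq_of_forall_exists_apply_eq [NormedAddCommGroup H]
    [InnerProductSpace 𝕜 H] [CompleteSpace H] (Φ : H →L[𝕜] X) {T : Y →L[𝕜] X} {C : ℝ}
    (hT : ∀ y, ∃ v, Φ v = T y ∧ ‖v‖ ≤ C * ‖y‖) :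
    ∃ S : Y →L[𝕜] H, Φ.comp S = T ∧ ∀ y, ‖S y‖ ≤ C * ‖y‖ := by
  choose v hΦv hv using hT
  -- the projection onto `(ker Φ)ᗮ` picks the minimal-norm preimage, which depends linearly on `y`
  let K := LinearMap.ker (Φ : H →ₗ[𝕜] X)
  have : CompleteSpace K := (Φ.isClosed_ker).completeSpace_coe
  let Q := Kᗮ.starProjection
  have hΦQ (w : H) : Φ (Q w) = Φ w := by
    rw [Submodule.starProjection_orthogonal_val, map_sub,
      show Φ (K.starProjection w) = 0 from K.starProjection_apply_mem w, sub_zero]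
  have hQ {w w' : H} (h : Φ w = Φ w') : Q w = Q w' := by
    rw [← sub_eq_zero, ← map_sub, Submodule.starProjection_apply_eq_zero_iff]
    exact K.le_orthogonal_orthogonal (by simp [K, h])
  let S : Y →ₗ[𝕜] H :=
    { toFun := fun y => Q (v y)
      map_add' := fun y y' => (hQ (w' := v y + v y') (by simp [hΦv])).trans (map_add ..)
      map_smul' := fun a y => (hQ (w' := a • v y) (by simp [hΦv])).trans (map_smul ..) }
  have hS (y : Y) : ‖S y‖ ≤ C * ‖y‖ := (Kᗮ.norm_starProjection_apply_le _).trans (hv y)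
  exact ⟨S.mkContinuous C hS, ContinuousLinearMap.ext fun y => (hΦQ _).trans (hΦv y), hS⟩

end Lift

variable (𝕜) in
def l2PartialSum (x : ℕ → X) (n : ℕ) : ℓ²(ℕ, 𝕜) →L[𝕜] X :=
  ∑ k ∈ Finset.range n, (lp.evalCLM 𝕜 (fun _ : ℕ => 𝕜) 2 k).smulRight (x k)

theorem l2PartialSum_apply (x : ℕ → X) (n : ℕ) (μ : ℓ²(ℕ, 𝕜)) :
    l2PartialSum 𝕜 x n μ = ∑ k ∈ Finset.range n, μ k • x k := by
  simp only [l2PartialSum, sum_apply, ContinuousLinearMap.smulRight_apply]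
  rfl

theorem isFiniteRankOp_l2PartialSum (x : ℕ → X) (n : ℕ) :
    IsFiniteRankOp 𝕜 (l2PartialSum 𝕜 x n) := by
  have := FiniteDimensional.span_of_finite 𝕜 ((Finset.range n).finite_toSet.image x)
  refine Submodule.finiteDimensional_of_le (?_ : _ ≤ Submodule.span 𝕜 (x '' ↑(Finset.range n)))
  rintro _ ⟨μ, rfl⟩
  rw [ContinuousLinearMap.coe_coe, l2PartialSum_apply]
  exact Submodule.sum_mem _ fun k hk => Submodule.smul_mem _ _ (Submodule.subset_span ⟨k, hk, rfl⟩)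

theorem image_closedBall_sub_l2PartialSum_subset {x : ℕ → X} {Φ : ℓ²(ℕ, 𝕜) →L[𝕜] X}
    (hΦ : ∀ μ, HasSum (fun k => μ k • x k) (Φ μ)) (n : ℕ) :
    ⇑(Φ - l2PartialSum 𝕜 x n) '' closedBall 0 1 ⊆ pConvHull 𝕜 2 fun k => x (n + k) := by
  rintro _ ⟨μ, hμ, rfl⟩
  refine ⟨fun k => μ (n + k), ?_, ?_⟩
  · exact (inCoeffBall_two_iff.mpr ⟨μ, mem_closedBall_zero_iff.mp hμ, rfl⟩).comp_injective
      (add_right_injective n)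
  · rw [sub_apply, l2PartialSum_apply]
    simpa only [add_comm n] using (hasSum_nat_add_iff' n).mpr (hΦ μ)

/-- Every Banach space has the `K_u2`-AP. -/
theorem stmt_16 (𝕜 : Type) [RCLike 𝕜] (X : Type) [NormedAddCommGroup X] [NormedSpace 𝕜 X]
    [CompleteSpace X] : HasKupAP 𝕜 2 X := by
  intro Y _ _ _ T ⟨x, hx, hT⟩
  obtain ⟨Φ, hΦ⟩ := hx.1.exists_hasSum_smul
  rw [pConvHull_two_eq_image_closedBall hΦ] at hT
  obtain ⟨S, rfl, hS⟩ := Φ.exists_comp_eq_of_forall_exists_apply_eq (C := 1)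
    fun y => by simpa using exists_apply_eq_norm_le_of_image_closedBall_subset hT y
  have hS_ball : S '' closedBall 0 1 ⊆ closedBall 0 1 := by
    rintro _ ⟨y, hy, rfl⟩
    simpa using (hS y).trans (by simpa using hy)
  have hcov (n : ℕ) : ⇑(Φ.comp S - (l2PartialSum 𝕜 x n).comp S) '' closedBall 0 1 ⊆
      pConvHull 𝕜 2 fun k => x (n + k) := by
    rw [← ContinuousLinearMap.sub_comp, ContinuousLinearMap.coe_comp, Set.image_comp]
    exact (Set.image_mono hS_ball).trans (image_closedBall_sub_l2PartialSum_subset hΦ n)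
  refine ⟨fun n => (l2PartialSum 𝕜 x n).comp S, fun n => (isFiniteRankOp_l2PartialSum x n).comp S,
    fun n => ⟨_, hx.nat_add n, hcov n⟩, ?_⟩
  exact squeeze_zero (fun n => kupNorm_nonneg 2 _)
    (fun n => kupNorm_le_weakPNorm (hx.nat_add n) (hcov n)) hx.2

end
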